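/- arXiv:1704.03547 — 3 statements merged into one kernel-verified Lean document; each statement's English description precedes it below -/
import Mathlib

section
/- Let v be a binary XOS valuation on [m], let 0 < α ≤ 1/2, let k be a positive integer, and let (b_1,…,b_k) be a (k,α)-sketch of v. Let a be a clause of v and set A = {i ∈ [m] : i ∈ a}. Then, writing x_i = (1/k) ∑_{j=1}^k 1[i ∈ b_j], the following strengthened sketch inequality holds: ∑_{i=1}^m (x_i − 2α x_i²) + 2α ∑_{i∈A} x_i ≥ |A| − α·(|A| + ∑_{i=1}^m x_i)/k. -/
/-! Replacing any single clause `b j` of the sketch by `a` cannot increase the objective.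
Averaging these `k` inequalities over `j`, the first-order terms of `x ↦ x - α x²` add up to
the linear part of the claim, while the second-order terms are squares of `±1/k` steps and
contribute at most `α (1[i ∈ a] + x_i) / k` per item. -/

open Finset

/-- `x_i`: the fraction of the `k` sketch clauses `b` containing item `i`. -/
noncomputable def sketchX {m k : ℕ} (b : Fin k → Finset (Fin m)) (i : Fin m) : ℝ :=
  (∑ j, if i ∈ b j then (1 : ℝ) else 0) / k

/-- The objective `∑ i (x_i − α x_i²)` that a `(k,α)`-sketch maximizes. -/
noncomputable def sketchObj {m k : ℕ} (α : ℝ) (b : Fin k → Finset (Fin m)) : ℝ :=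
  ∑ i, (sketchX b i - α * (sketchX b i) ^ 2)

/-- `(b_1,…,b_k)` is a `(k,α)`-sketch of the binary XOS valuation with clause set `V`. -/
def IsSketch {m k : ℕ} (α : ℝ) (V : Finset (Finset (Fin m)))
    (b : Fin k → Finset (Fin m)) : Prop :=
  (∀ j, b j ∈ V) ∧
    ∀ c : Fin k → Finset (Fin m), (∀ j, c j ∈ V) → sketchObj α c ≤ sketchObj α b

open Function

section

variable {m k : ℕ} (b : Fin k → Finset (Fin m)) (a : Finset (Fin m)) (i : Fin m)

lemma sketchX_update (j : Fin k) :
    sketchX (update b j a) i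
      = sketchX b i + ((if i ∈ a then 1 else 0) - (if i ∈ b j then 1 else 0)) / k := by
  rw [sketchX, sketchX, ← add_div, ← sum_erase_add _ _ (mem_univ j),
    ← sum_erase_add _ _ (mem_univ j), update_self,
    sum_congr rfl fun j' hj' => by rw [update_of_ne (ne_of_mem_erase hj')]]
  ring

lemma sum_sketchX_update_sub (hk : k ≠ 0) :
    ∑ j, (sketchX (update b j a) i - sketchX b i) = (if i ∈ a then 1 else 0) - sketchX b i := by
  simp_rw [sketchX_update, add_sub_cancel_left, ← sum_div, sum_sub_distrib, sum_const, card_univ,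
    Fintype.card_fin, nsmul_eq_mul]
  rw [sketchX]
  field_simp

lemma sum_sq_sketchX_update_sub_le (hk : k ≠ 0) :
    ∑ j, (sketchX (update b j a) i - sketchX b i) ^ 2
      ≤ ((if i ∈ a then 1 else 0) + sketchX b i) / k := by
  calc ∑ j, (sketchX (update b j a) i - sketchX b i) ^ 2
      ≤ ∑ j, ((if i ∈ a then 1 else 0) + (if i ∈ b j then 1 else 0)) / (k : ℝ) ^ 2 := by
        simp_rw [sketchX_update, add_sub_cancel_left, div_pow]
        gcongr with j
        split_ifs <;> norm_num
    _ = ((if i ∈ a then 1 else 0) + sketchX b i) / k := by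
        rw [← sum_div, sum_add_distrib, sum_const, card_univ, Fintype.card_fin, nsmul_eq_mul,
          sketchX]
        field_simp

lemma sum_update_loss_le (hk : k ≠ 0) {α : ℝ} (hα : 0 ≤ α) :
    ∑ j, ((sketchX b i - α * sketchX b i ^ 2)
        - (sketchX (update b j a) i - α * sketchX (update b j a) i ^ 2))
      ≤ sketchX b i - (if i ∈ a then 1 else 0)
        + 2 * α * sketchX b i * ((if i ∈ a then 1 else 0) - sketchX b i)
        + α * (((if i ∈ a then 1 else 0) + sketchX b i) / k) := by
  have hloss : ∀ x y : ℝ, (x - α * x ^ 2) - (y - α * y ^ 2)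
      = -(y - x) + 2 * α * x * (y - x) + α * (y - x) ^ 2 := fun x y => by ring
  simp only [hloss, sum_add_distrib, sum_neg_distrib, ← mul_sum, sum_sketchX_update_sub b a i hk]
  have := mul_le_mul_of_nonneg_left (sum_sq_sketchX_update_sub_le b a i hk) hα
  linarith

lemma sum_sketchObj_sub_update_le (hk : k ≠ 0) {α : ℝ} (hα : 0 ≤ α) :
    ∑ j, (sketchObj α b - sketchObj α (update b j a))
      ≤ ∑ i, (sketchX b i - (if i ∈ a then 1 else 0)
        + 2 * α * sketchX b i * ((if i ∈ a then 1 else 0) - sketchX b i)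
        + α * (((if i ∈ a then 1 else 0) + sketchX b i) / k)) := by
  simp_rw [sketchObj, ← sum_sub_distrib]
  rw [sum_comm]
  exact sum_le_sum fun i _ => sum_update_loss_le b a i hk hα

end

lemma IsSketch.sketchObj_update_le {m k : ℕ} {α : ℝ} {V : Finset (Finset (Fin m))}
    {b : Fin k → Finset (Fin m)} (hb : IsSketch α V b) {a : Finset (Fin m)} (ha : a ∈ V)
    (j : Fin k) : sketchObj α (update b j a) ≤ sketchObj α b :=
  hb.2 _ fun j' => by
    rcases eq_or_ne j' j with rfl | h
    · simpa using ha
    · simpa [update_of_ne h] using hb.1 j'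

lemma sum_loss_bound_eq {ι : Type*} [Fintype ι] [DecidableEq ι] (x : ι → ℝ) (a : Finset ι)
    (α c : ℝ) :
    ∑ i, (x i - (if i ∈ a then 1 else 0) + 2 * α * x i * ((if i ∈ a then 1 else 0) - x i)
        + α * (((if i ∈ a then 1 else 0) + x i) / c))
      = ∑ i, (x i - 2 * α * x i ^ 2) + 2 * α * ∑ i ∈ a, x i
        - ((a.card : ℝ) - α * ((a.card : ℝ) + ∑ i, x i) / c) := by
  have hterm : ∀ i, x i - (if i ∈ a then 1 else 0) + 2 * α * x i * ((if i ∈ a then 1 else 0) - x i)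
      + α * (((if i ∈ a then 1 else 0) + x i) / c)
      = (x i - 2 * α * x i ^ 2) + 2 * α * (if i ∈ a then x i else 0)
        - ((1 - α / c) * (if i ∈ a then 1 else 0)) + α / c * x i := fun i => by
    split_ifs <;> ring
  simp only [hterm, sum_add_distrib, sum_sub_distrib, ← mul_sum, sum_ite_mem, univ_inter,
    sum_const, nsmul_eq_mul, mul_one]
  ring

theorem stmt4_general {m k : ℕ} (hk : 0 < k) (α : ℝ) (hα0 : 0 < α)
    (V : Finset (Finset (Fin m)))
    (b : Fin k → Finset (Fin m)) (hb : IsSketch α V b)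
    (a : Finset (Fin m)) (ha : a ∈ V) :
    ∑ i, (sketchX b i - 2 * α * (sketchX b i) ^ 2) + 2 * α * ∑ i ∈ a, sketchX b i
      ≥ (a.card : ℝ) - α * ((a.card : ℝ) + ∑ i, sketchX b i) / k := by
  have hswap : 0 ≤ ∑ j, (sketchObj α b - sketchObj α (update b j a)) :=
    sum_nonneg fun j _ => sub_nonneg.2 (hb.sketchObj_update_le ha j)
  have hbound := hswap.trans (sum_sketchObj_sub_update_le b a hk.ne' hα0.le)
  rw [sum_loss_bound_eq] at hbound
  linarith

/-- the strengthened sketch inequality for binary XOS valuations, with `A`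
equal to (the set of) a clause `a` of `v` and error term `α(|A| + ∑ x_i)/k`. -/
theorem stmt4 {m k : ℕ} (hk : 0 < k) (α : ℝ) (hα0 : 0 < α) (hα : α ≤ 1 / 2)
    (V : Finset (Finset (Fin m))) (hV : V.Nonempty)
    (b : Fin k → Finset (Fin m)) (hb : IsSketch α V b)
    (a : Finset (Fin m)) (ha : a ∈ V) :
    ∑ i, (sketchX b i - 2 * α * (sketchX b i) ^ 2) + 2 * α * ∑ i ∈ a, sketchX b i
      ≥ (a.card : ℝ) - α * ((a.card : ℝ) + ∑ i, sketchX b i) / k :=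
  stmt4_general hk α hα0 V b hb a ha
end

section
/- Let v1 and v2 be XOS valuations on [m], let k be a positive integer, let (b¹_1,…,b¹_k) be a (k,1/3)-sketch of v1 and (b²_1,…,b²_k) a (k,1/3)-sketch of v2. Then (1/k²) ∑_{j=1}^k ∑_{j'=1}^k SW*(b¹_j, b²_{j'}) ≥ (23/32 − 1/k) · SW*(v1, v2); in particular max_{j,j' ∈ [k]} SW*(b¹_j, b²_{j'}) ≥ (23/32 − 1/k) · SW*(v1, v2), so the deterministic simultaneous protocol that allocates according to the best pair of reported sketch clauses is a (23/32 − 1/k)-approximation to the 2-party XOS allocation problem (and the corresponding thresholding rule solves the 2-party XOS decision problem with the same ratio). -/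
/-!
For an item `i` and a threshold `u > 0`, let `x` and `y` be the fractions of clauses of the two
sketches that value `i` at least `u`, and `o₁`, `o₂` the indicators that the clauses attaining
an optimal allocation do. The average welfare of the `k²` pairs of sketch clauses is
`∑ᵢ ∫ (x + y - x y) du`. Replacing one sketch clause by the optimal clause and averaging over
the `k` positions changes the sketch objective by `∫ (o - x)(1 - 2x/3) - O(1/k)`, so local
optimality bounds `∑ᵢ ∫ (o - x)(1 - 2x/3)` by `2 SW* / (3k)`. The pointwise inequality
`23/32 · (o₁ ∨ o₂) ≤ x + y - x y + 3/4 (o₁ - x)(1 - 2x/3) + 3/4 (o₂ - y)(1 - 2y/3)`,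
integrated and summed over the items, then gives the bound.
-/

open Finset MeasureTheory

/-- Value of an additive valuation `a : Fin m → ℝ` on a bundle `S`. -/
noncomputable def aval {m : ℕ} (a : Fin m → ℝ) (S : Finset (Fin m)) : ℝ := ∑ i ∈ S, a i

/-- Value of an XOS valuation with (nonempty list of) additive clauses `C` on a bundle `S`. -/
noncomputable def xosVal {m t : ℕ} (C : Fin (t + 1) → Fin m → ℝ) (S : Finset (Fin m)) : ℝ :=
  Finset.univ.sup' Finset.univ_nonempty fun j => aval (C j) S

/-- Optimal welfare between two (ℝ-valued) valuations on `[m]`. -/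
noncomputable def swR {m : ℕ} (v1 v2 : Finset (Fin m) → ℝ) : ℝ :=
  Finset.univ.sup' Finset.univ_nonempty fun S : Finset (Fin m) => v1 S + v2 Sᶜ

/-- `x_{i,u}`: the fraction of the `k` sketch clauses `b` whose value for item `i` is `≥ u`. -/
noncomputable def rX {m k : ℕ} (b : Fin k → Fin m → ℝ) (i : Fin m) (u : ℝ) : ℝ :=
  (∑ j, if u ≤ b j i then (1 : ℝ) else 0) / k

/-- The objective `∑ i ∫₀^∞ (x_{i,u} − α x_{i,u}²) du` that a `(k,α)`-sketch of an XOS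
valuation maximizes. -/
noncomputable def rObj {m k : ℕ} (α : ℝ) (b : Fin k → Fin m → ℝ) : ℝ :=
  ∑ i, ∫ u in Set.Ioi (0 : ℝ), (rX b i u - α * (rX b i u) ^ 2)

/-- `(C (σ 1),…,C (σ k))` is a `(k,α)`-sketch of the XOS valuation with clauses `C`. -/
def IsSketchR {m t k : ℕ} (α : ℝ) (C : Fin (t + 1) → Fin m → ℝ)
    (σ : Fin k → Fin (t + 1)) : Prop :=
  ∀ τ : Fin k → Fin (t + 1), rObj α (fun j => C (τ j)) ≤ rObj α (fun j => C (σ j))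

noncomputable def indLe (c u : ℝ) : ℝ := if u ≤ c then 1 else 0

lemma indLe_eq_zero_or_one (c u : ℝ) : indLe c u = 0 ∨ indLe c u = 1 := by
  unfold indLe; split_ifs <;> simp

lemma indLe_nonneg (c u : ℝ) : 0 ≤ indLe c u := by
  unfold indLe; split_ifs <;> norm_num

lemma indLe_max (a b u : ℝ) :
    indLe (max a b) u = indLe a u + indLe b u - indLe a u * indLe b u := by
  by_cases ha : u ≤ a <;> by_cases hb : u ≤ b <;> simp [indLe, ha, hb]

lemma indLe_eqOn_indicator (c : ℝ) :
    Set.EqOn (indLe c) ((Set.Ioc 0 c).indicator 1) (Set.Ioi 0) := by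
  intro u hu
  by_cases h : u ≤ c <;> simp [indLe, Set.indicator, h, Set.mem_Ioi.mp hu]

lemma integrableOn_indLe (c : ℝ) : IntegrableOn (indLe c) (Set.Ioi 0) := by
  refine IntegrableOn.congr_fun ?_ (indLe_eqOn_indicator c).symm measurableSet_Ioi
  exact ((integrable_indicator_iff measurableSet_Ioc).2
    (integrableOn_const measure_Ioc_lt_top.ne)).integrableOn

lemma setIntegral_indLe (c : ℝ) : ∫ u in Set.Ioi 0, indLe c u = max c 0 := by
  rw [setIntegral_congr_fun measurableSet_Ioi (indLe_eqOn_indicator c),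
    integral_indicator measurableSet_Ioc]
  simp

-- Unlike integrability alone, this is closed under products.
def BoundedIntegrable (f : ℝ → ℝ) : Prop :=
  IntegrableOn f (Set.Ioi 0) ∧ ∃ C, ∀ u, |f u| ≤ C

namespace BoundedIntegrable

variable {f g : ℝ → ℝ}

lemma add (hf : BoundedIntegrable f) (hg : BoundedIntegrable g) :
    BoundedIntegrable (fun u => f u + g u) := by
  obtain ⟨hf, Cf, hCf⟩ := hf
  obtain ⟨hg, Cg, hCg⟩ := hg
  exact ⟨hf.add hg, Cf + Cg, fun u => (abs_add_le _ _).trans (add_le_add (hCf u) (hCg u))⟩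

lemma const_mul (hf : BoundedIntegrable f) (c : ℝ) : BoundedIntegrable (fun u => c * f u) := by
  obtain ⟨hf, C, hC⟩ := hf
  exact ⟨hf.const_mul c, |c| * C, fun u => by
    rw [abs_mul]; exact mul_le_mul_of_nonneg_left (hC u) (abs_nonneg c)⟩

lemma sub (hf : BoundedIntegrable f) (hg : BoundedIntegrable g) :
    BoundedIntegrable (fun u => f u - g u) := by
  simpa [sub_eq_add_neg] using hf.add (hg.const_mul (-1))

lemma mul (hf : BoundedIntegrable f) (hg : BoundedIntegrable g) :
    BoundedIntegrable (fun u => f u * g u) := by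
  obtain ⟨hf, Cf, hCf⟩ := hf
  obtain ⟨hg, Cg, hCg⟩ := hg
  refine ⟨hg.bdd_mul hf.aestronglyMeasurable (ae_of_all _ fun u => hCf u), Cf * Cg, fun u => ?_⟩
  rw [abs_mul]
  exact mul_le_mul (hCf u) (hCg u) (abs_nonneg _) ((abs_nonneg _).trans (hCf u))

lemma congr (hf : BoundedIntegrable f) (h : ∀ u, f u = g u) : BoundedIntegrable g :=
  funext h ▸ hf

lemma sum {ι : Type*} (s : Finset ι) {F : ι → ℝ → ℝ} (hF : ∀ j ∈ s, BoundedIntegrable (F j)) :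
    BoundedIntegrable (fun u => ∑ j ∈ s, F j u) := by
  classical
  induction s using Finset.induction_on with
  | empty => exact ⟨by simp [IntegrableOn], 0, by simp⟩
  | insert a s ha ih =>
    simpa [Finset.sum_insert ha] using
      (hF a (mem_insert_self a s)).add (ih fun j hj => hF j (mem_insert_of_mem hj))

end BoundedIntegrable

lemma boundedIntegrable_indLe (c : ℝ) : BoundedIntegrable (indLe c) :=
  ⟨integrableOn_indLe c, 1, fun u => by rcases indLe_eq_zero_or_one c u with h | h <;> simp [h]⟩

section Profile

variable {m k : ℕ}

lemma rX_nonneg (b : Fin k → Fin m → ℝ) (i : Fin m) (u : ℝ) : 0 ≤ rX b i u :=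
  div_nonneg (sum_nonneg fun j _ => by split_ifs <;> norm_num) k.cast_nonneg

lemma rX_le_one (hk : 0 < k) (b : Fin k → Fin m → ℝ) (i : Fin m) (u : ℝ) : rX b i u ≤ 1 := by
  rw [rX, div_le_one (by exact_mod_cast hk)]
  calc (∑ j, if u ≤ b j i then (1 : ℝ) else 0) ≤ ∑ _j : Fin k, 1 :=
        sum_le_sum fun j _ => by split_ifs <;> norm_num
    _ = k := by simp

lemma rX_eq_mul_sum (b : Fin k → Fin m → ℝ) (i : Fin m) :
    rX b i = fun u => (k : ℝ)⁻¹ * ∑ j, indLe (b j i) u := by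
  funext u
  exact div_eq_inv_mul _ _

lemma boundedIntegrable_rX (b : Fin k → Fin m → ℝ) (i : Fin m) : BoundedIntegrable (rX b i) := by
  rw [rX_eq_mul_sum]
  exact (BoundedIntegrable.sum univ fun j _ => boundedIntegrable_indLe (b j i)).const_mul _

lemma setIntegral_rX (b : Fin k → Fin m → ℝ) (i : Fin m) (hb : ∀ j, 0 ≤ b j i) :
    ∫ u in Set.Ioi 0, rX b i u = (∑ j, b j i) / k := by
  rw [rX_eq_mul_sum, integral_const_mul,
    integral_finsetSum _ fun j _ => integrableOn_indLe (b j i)]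
  simp only [setIntegral_indLe, max_eq_left (hb _), div_eq_inv_mul]

lemma rX_add_sub_mul_eq (b₁ b₂ : Fin k → Fin m → ℝ) (i : Fin m) (u : ℝ) :
    rX b₁ i u + rX b₂ i u - rX b₁ i u * rX b₂ i u
      = (k : ℝ)⁻¹ ^ 2 * ∑ j, ∑ j', indLe (max (b₁ j i) (b₂ j' i)) u := by
  simp only [indLe_max, sum_sub_distrib, sum_add_distrib, sum_const, card_univ,
    Fintype.card_fin, nsmul_eq_mul, ← mul_sum, ← sum_mul, rX_eq_mul_sum]
  field_simp

end Profile

lemma swR_aval {m : ℕ} (a b : Fin m → ℝ) : swR (aval a) (aval b) = ∑ i, max (a i) (b i) := by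
  refine le_antisymm (sup'_le _ _ fun S _ => ?_) ?_
  · rw [← sum_add_sum_compl S fun i => max (a i) (b i)]
    exact add_le_add (sum_le_sum fun i _ => le_max_left _ _)
      (sum_le_sum fun i _ => le_max_right _ _)
  · set S := univ.filter fun i => b i ≤ a i
    refine le_trans (le_of_eq ?_) (le_sup' (fun S => aval a S + aval b Sᶜ) (mem_univ S))
    rw [← sum_add_sum_compl S fun i => max (a i) (b i)]
    congr 1 <;> refine sum_congr rfl fun i hi => ?_
    · exact max_eq_left (mem_filter.mp hi).2
    · simp only [S, mem_compl, mem_filter, mem_univ, true_and, not_le] at hi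
      exact max_eq_right hi.le

lemma avg_swR_aval_eq {m k : ℕ} (b₁ b₂ : Fin k → Fin m → ℝ)
    (hb₁ : ∀ j i, 0 ≤ b₁ j i) :
    1 / (k : ℝ) ^ 2 * ∑ j, ∑ j', swR (aval (b₁ j)) (aval (b₂ j'))
      = ∑ i, ∫ u in Set.Ioi 0, (rX b₁ i u + rX b₂ i u - rX b₁ i u * rX b₂ i u) := by
  have hint : ∀ i, ∫ u in Set.Ioi 0, ∑ j, ∑ j', indLe (max (b₁ j i) (b₂ j' i)) u
      = ∑ j, ∑ j', max (b₁ j i) (b₂ j' i) := fun i => by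
    rw [integral_finsetSum _ fun j _ =>
      (BoundedIntegrable.sum univ fun j' _ => boundedIntegrable_indLe _).1]
    refine sum_congr rfl fun j _ => ?_
    rw [integral_finsetSum _ fun j' _ => integrableOn_indLe _]
    refine sum_congr rfl fun j' _ => ?_
    rw [setIntegral_indLe, max_eq_left (le_max_of_le_left (hb₁ j i))]
  simp_rw [rX_add_sub_mul_eq, integral_const_mul, hint, swR_aval, ← mul_sum, one_div, inv_pow]
  exact congrArg _ ((sum_congr rfl fun _ _ => sum_comm).trans sum_comm)

-- `x` is the fraction of the `k` sketch clauses whose value is at least the threshold, `o` the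
-- corresponding indicator for a clause swapped in at one position.
def swapGain (α x o : ℝ) : ℝ := (o - x) * (1 - 2 * α * x)

def swapErr (x o : ℝ) : ℝ := o + x - 2 * o * x

section Sketch

variable {m k : ℕ}

lemma BoundedIntegrable.swapGain {x o : ℝ → ℝ} (hx : BoundedIntegrable x)
    (ho : BoundedIntegrable o) (α : ℝ) :
    BoundedIntegrable (fun u => swapGain α (x u) (o u)) :=
  ((ho.sub hx).sub (((ho.sub hx).mul hx).const_mul (2 * α))).congr fun u => by
    simp only [_root_.swapGain]; ring

lemma BoundedIntegrable.swapErr {x o : ℝ → ℝ} (hx : BoundedIntegrable x)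
    (ho : BoundedIntegrable o) : BoundedIntegrable (fun u => swapErr (x u) (o u)) :=
  ((ho.add hx).sub ((ho.mul hx).const_mul 2)).congr fun u => by
    simp only [_root_.swapErr]; ring

lemma BoundedIntegrable.objDensity {x : ℝ → ℝ} (hx : BoundedIntegrable x) (α : ℝ) :
    BoundedIntegrable (fun u => x u - α * x u ^ 2) :=
  (hx.sub ((hx.mul hx).const_mul α)).congr fun u => by ring

lemma rX_update (b : Fin k → Fin m → ℝ) (j₀ : Fin k) (c : Fin m → ℝ) (i : Fin m) (u : ℝ) :
    rX (Function.update b j₀ c) i u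
      = rX b i u + (indLe (c i) u - indLe (b j₀ i) u) / k := by
  have hterm : ∀ j, indLe (Function.update b j₀ c j i) u
      = indLe (b j i) u + if j = j₀ then indLe (c i) u - indLe (b j₀ i) u else 0 := by
    intro j
    rcases eq_or_ne j j₀ with rfl | h <;> simp [*]
  simp only [rX_eq_mul_sum, hterm, sum_add_distrib, sum_ite_eq', mem_univ, if_true]
  ring

lemma sum_objDensity_shift (hk : 0 < k) (α x o : ℝ) (ho : o = 0 ∨ o = 1) (e : Fin k → ℝ)
    (he : ∀ j, e j = 0 ∨ e j = 1) (hx : ∑ j, e j = k * x) :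
    ∑ j, ((x + (o - e j) / k) - α * (x + (o - e j) / k) ^ 2)
      = k * (x - α * x ^ 2) + swapGain α x o - α / k * swapErr x o := by
  have hk' : (k : ℝ) ≠ 0 := by positivity
  -- `e j` and `o` are idempotent, so each summand is affine in `e j`
  have hterm : ∀ j, (x + (o - e j) / k) - α * (x + (o - e j) / k) ^ 2
      = (x - α * x ^ 2 + o / k * (1 - 2 * α * x) - α * o / k ^ 2)
        - ((1 - 2 * α * x) / k + α * (1 - 2 * o) / k ^ 2) * e j := by
    intro j
    rcases he j with h | h <;> rcases ho with rfl | rfl <;> rw [h] <;> field_simp <;> ring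
  simp only [hterm, sum_sub_distrib, sum_const, card_univ, Fintype.card_fin, nsmul_eq_mul,
    ← mul_sum, hx, swapGain, swapErr]
  field_simp
  ring

lemma sum_rObj_update (hk : 0 < k) (α : ℝ) (b : Fin k → Fin m → ℝ) (c : Fin m → ℝ) :
    ∑ j₀, rObj α (Function.update b j₀ c)
      = k * rObj α b + (∑ i, ∫ u in Set.Ioi 0, swapGain α (rX b i u) (indLe (c i) u))
        - α / k * ∑ i, ∫ u in Set.Ioi 0, swapErr (rX b i u) (indLe (c i) u) := by
  have hitem : ∀ i, ∑ j₀, ∫ u in Set.Ioi 0,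
        (rX (Function.update b j₀ c) i u - α * rX (Function.update b j₀ c) i u ^ 2)
      = k * (∫ u in Set.Ioi 0, (rX b i u - α * rX b i u ^ 2))
        + (∫ u in Set.Ioi 0, swapGain α (rX b i u) (indLe (c i) u))
        - α / k * ∫ u in Set.Ioi 0, swapErr (rX b i u) (indLe (c i) u) := by
    intro i
    have hx := boundedIntegrable_rX b i
    have ho := boundedIntegrable_indLe (c i)
    have hdens := (hx.objDensity α).const_mul k
    rw [← integral_finsetSum _ fun j₀ _ => ((boundedIntegrable_rX _ i).objDensity α).1,
      ← integral_const_mul, ← integral_const_mul, ← integral_add hdens.1 (hx.swapGain ho α).1,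
      ← integral_sub (hdens.add (hx.swapGain ho α)).1 ((hx.swapErr ho).const_mul _).1]
    refine setIntegral_congr_fun measurableSet_Ioi fun u _ => ?_
    simp only [rX_update]
    exact sum_objDensity_shift hk α _ _ (indLe_eq_zero_or_one _ _) _
      (fun j => indLe_eq_zero_or_one _ _) (by rw [rX_eq_mul_sum]; field_simp)
  simp only [rObj]
  rw [sum_comm, mul_sum, mul_sum, ← sum_add_distrib, ← sum_sub_distrib]
  exact sum_congr rfl fun i _ => hitem i

lemma IsSketchR.sum_swapGain_le {t : ℕ} {α : ℝ} {C : Fin (t + 1) → Fin m → ℝ}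
    {σ : Fin k → Fin (t + 1)} (hσ : IsSketchR α C σ) (hk : 0 < k) (j : Fin (t + 1)) :
    ∑ i, ∫ u in Set.Ioi 0, swapGain α (rX (fun j => C (σ j)) i u) (indLe (C j i) u)
      ≤ α / k * ∑ i, ∫ u in Set.Ioi 0, swapErr (rX (fun j => C (σ j)) i u) (indLe (C j i) u) := by
  have hswaps : ∑ j₀, rObj α (Function.update (fun j => C (σ j)) j₀ (C j))
      ≤ k * rObj α (fun j => C (σ j)) := by
    calc ∑ j₀, rObj α (Function.update (fun j => C (σ j)) j₀ (C j))
        ≤ ∑ _j₀ : Fin k, rObj α (fun j => C (σ j)) :=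
          sum_le_sum fun j₀ _ => Function.comp_update C σ j₀ j ▸ hσ (Function.update σ j₀ j)
      _ = k * rObj α (fun j => C (σ j)) := by simp
  rw [sum_rObj_update hk] at hswaps
  linarith

lemma sum_setIntegral_swapErr_le (hk : 0 < k) (b : Fin k → Fin m → ℝ) (c : Fin m → ℝ)
    (hb : ∀ j i, 0 ≤ b j i) (hc : ∀ i, 0 ≤ c i) {W : ℝ} (hbW : ∀ j, aval (b j) univ ≤ W)
    (hcW : aval c univ ≤ W) :
    ∑ i, ∫ u in Set.Ioi 0, swapErr (rX b i u) (indLe (c i) u) ≤ 2 * W := by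
  have hitem : ∀ i, ∫ u in Set.Ioi 0, swapErr (rX b i u) (indLe (c i) u)
      ≤ c i + (∑ j, b j i) / k := fun i => by
    have hx := boundedIntegrable_rX b i
    have ho := boundedIntegrable_indLe (c i)
    calc ∫ u in Set.Ioi 0, swapErr (rX b i u) (indLe (c i) u)
        ≤ ∫ u in Set.Ioi 0, (indLe (c i) u + rX b i u) :=
          setIntegral_mono_on (hx.swapErr ho).1 (ho.add hx).1 measurableSet_Ioi fun u _ => by
            have := mul_nonneg (indLe_nonneg (c i) u) (rX_nonneg b i u)
            simp only [swapErr]; linarith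
      _ = c i + (∑ j, b j i) / k := by
          rw [integral_add ho.1 hx.1, setIntegral_indLe, max_eq_left (hc i),
            setIntegral_rX b i fun j => hb j i]
  have hbavg : (∑ j, aval (b j) univ) / k ≤ W := by
    rw [div_le_iff₀ (by exact_mod_cast hk)]
    simpa [mul_comm] using sum_le_sum fun j (_ : j ∈ univ) => hbW j
  calc ∑ i, ∫ u in Set.Ioi 0, swapErr (rX b i u) (indLe (c i) u)
      ≤ ∑ i, (c i + (∑ j, b j i) / k) := sum_le_sum fun i _ => hitem i
    _ = aval c univ + (∑ j, aval (b j) univ) / k := by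
      rw [sum_add_distrib, ← sum_div, sum_comm]; rfl
    _ ≤ 2 * W := by linarith

end Sketch

-- Tight at `o₁ = 1`, `o₂ = 0`, `x = y + 1/4`: there the right side minus `23/32` is
-- `(x - y - 1/4)² / 2`.
lemma welfare_density_le {x y o₁ o₂ : ℝ} (hx₀ : 0 ≤ x) (hx₁ : x ≤ 1) (hy₀ : 0 ≤ y) (hy₁ : y ≤ 1)
    (ho₁ : o₁ = 0 ∨ o₁ = 1) (ho₂ : o₂ = 0 ∨ o₂ = 1) :
    23 / 32 * (o₁ + o₂ - o₁ * o₂)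
      ≤ x + y - x * y + 3 / 4 * swapGain (1 / 3) x o₁ + 3 / 4 * swapGain (1 / 3) y o₂ := by
  simp only [swapGain]
  rcases ho₁ with rfl | rfl <;> rcases ho₂ with rfl | rfl <;>
    nlinarith [sq_nonneg (x - y - 1 / 4), sq_nonneg (x - y + 1 / 4)]

lemma max_le_setIntegral_welfare {m k : ℕ} (hk : 0 < k) (b₁ b₂ : Fin k → Fin m → ℝ)
    (c₁ c₂ : ℝ) (i : Fin m) :
    23 / 32 * max c₁ c₂
      ≤ (∫ u in Set.Ioi 0, (rX b₁ i u + rX b₂ i u - rX b₁ i u * rX b₂ i u))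
        + 3 / 4 * (∫ u in Set.Ioi 0, swapGain (1 / 3) (rX b₁ i u) (indLe c₁ u))
        + 3 / 4 * ∫ u in Set.Ioi 0, swapGain (1 / 3) (rX b₂ i u) (indLe c₂ u) := by
  have hx := boundedIntegrable_rX b₁ i
  have hy := boundedIntegrable_rX b₂ i
  have hg₁ := (hx.swapGain (boundedIntegrable_indLe c₁) (1 / 3)).const_mul (3 / 4)
  have hg₂ := (hy.swapGain (boundedIntegrable_indLe c₂) (1 / 3)).const_mul (3 / 4)
  have hunion := (hx.add hy).sub (hx.mul hy)
  calc 23 / 32 * max c₁ c₂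
      ≤ ∫ u in Set.Ioi 0, 23 / 32 * indLe (max c₁ c₂) u := by
        rw [integral_const_mul, setIntegral_indLe]
        exact mul_le_mul_of_nonneg_left (le_max_left _ _) (by norm_num)
    _ ≤ ∫ u in Set.Ioi 0, (rX b₁ i u + rX b₂ i u - rX b₁ i u * rX b₂ i u
          + 3 / 4 * swapGain (1 / 3) (rX b₁ i u) (indLe c₁ u)
          + 3 / 4 * swapGain (1 / 3) (rX b₂ i u) (indLe c₂ u)) := by
        refine setIntegral_mono_on ((boundedIntegrable_indLe _).const_mul _).1
          ((hunion.add hg₁).add hg₂).1 measurableSet_Ioi fun u _ => ?_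
        rw [indLe_max]
        exact welfare_density_le (rX_nonneg b₁ i u) (rX_le_one hk b₁ i u) (rX_nonneg b₂ i u)
          (rX_le_one hk b₂ i u) (indLe_eq_zero_or_one c₁ u) (indLe_eq_zero_or_one c₂ u)
    _ = _ := by
        rw [integral_add (hunion.add hg₁).1 hg₂.1, integral_add hunion.1 hg₁.1,
          integral_const_mul, integral_const_mul]

lemma welfare_le_avg_add_swapGain {m k : ℕ} (hk : 0 < k) (b₁ b₂ : Fin k → Fin m → ℝ)
    (hb₁ : ∀ j i, 0 ≤ b₁ j i) (c₁ c₂ : Fin m → ℝ) :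
    23 / 32 * swR (aval c₁) (aval c₂)
      ≤ 1 / (k : ℝ) ^ 2 * ∑ j, ∑ j', swR (aval (b₁ j)) (aval (b₂ j'))
        + 3 / 4 * (∑ i, ∫ u in Set.Ioi 0, swapGain (1 / 3) (rX b₁ i u) (indLe (c₁ i) u))
        + 3 / 4 * ∑ i, ∫ u in Set.Ioi 0, swapGain (1 / 3) (rX b₂ i u) (indLe (c₂ i) u) := by
  rw [swR_aval, avg_swR_aval_eq b₁ b₂ hb₁, mul_sum, mul_sum, mul_sum, ← sum_add_distrib,
    ← sum_add_distrib]
  exact sum_le_sum fun i _ => max_le_setIntegral_welfare hk b₁ b₂ (c₁ i) (c₂ i) i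

section XOS

variable {m t₁ t₂ : ℕ}

lemma le_swR {v₁ v₂ : Finset (Fin m) → ℝ} (S : Finset (Fin m)) : v₁ S + v₂ Sᶜ ≤ swR v₁ v₂ :=
  le_sup' (fun S => v₁ S + v₂ Sᶜ) (mem_univ S)

lemma aval_le_xosVal (C : Fin (t₁ + 1) → Fin m → ℝ) (j : Fin (t₁ + 1)) (S : Finset (Fin m)) :
    aval (C j) S ≤ xosVal C S :=
  le_sup' (fun j => aval (C j) S) (mem_univ j)

lemma xosVal_empty (C : Fin (t₁ + 1) → Fin m → ℝ) : xosVal C ∅ = 0 := by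
  simp [xosVal, aval]

lemma aval_univ_le_swR_left (C₁ : Fin (t₁ + 1) → Fin m → ℝ) (C₂ : Fin (t₂ + 1) → Fin m → ℝ)
    (j : Fin (t₁ + 1)) : aval (C₁ j) univ ≤ swR (xosVal C₁) (xosVal C₂) := by
  have := le_swR (v₁ := xosVal C₁) (v₂ := xosVal C₂) univ
  rw [compl_univ, xosVal_empty, add_zero] at this
  exact (aval_le_xosVal C₁ j univ).trans this

lemma aval_univ_le_swR_right (C₁ : Fin (t₁ + 1) → Fin m → ℝ) (C₂ : Fin (t₂ + 1) → Fin m → ℝ)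
    (j : Fin (t₂ + 1)) : aval (C₂ j) univ ≤ swR (xosVal C₁) (xosVal C₂) := by
  have := le_swR (v₁ := xosVal C₁) (v₂ := xosVal C₂) ∅
  rw [compl_empty, xosVal_empty, zero_add] at this
  exact (aval_le_xosVal C₂ j univ).trans this

lemma exists_swR_xosVal_le (C₁ : Fin (t₁ + 1) → Fin m → ℝ) (C₂ : Fin (t₂ + 1) → Fin m → ℝ) :
    ∃ j₁ j₂, swR (xosVal C₁) (xosVal C₂) ≤ swR (aval (C₁ j₁)) (aval (C₂ j₂)) := by
  obtain ⟨S, -, hS⟩ := exists_mem_eq_sup' univ_nonempty fun S => xosVal C₁ S + xosVal C₂ Sᶜ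
  obtain ⟨j₁, -, hj₁⟩ := exists_mem_eq_sup' univ_nonempty fun j => aval (C₁ j) S
  obtain ⟨j₂, -, hj₂⟩ := exists_mem_eq_sup' univ_nonempty fun j => aval (C₂ j) Sᶜ
  refine ⟨j₁, j₂, le_of_eq_of_le ?_ (le_swR S)⟩
  rw [swR, hS, xosVal, xosVal, hj₁, hj₂]

end XOS

lemma exists_le_of_le_avg {k : ℕ} (hk : 0 < k) {f : Fin k → Fin k → ℝ} {c : ℝ}
    (h : c ≤ 1 / (k : ℝ) ^ 2 * ∑ j, ∑ j', f j j') : ∃ j j', c ≤ f j j' := by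
  have hne : (univ : Finset (Fin k)).Nonempty := univ_nonempty_iff.mpr ⟨⟨0, hk⟩⟩
  have hsum : ∑ _j : Fin k, ∑ _j' : Fin k, c ≤ ∑ j, ∑ j', f j j' := by
    have hk2 : (0 : ℝ) < (k : ℝ) ^ 2 := by positivity
    rw [one_div, ← div_eq_inv_mul, le_div_iff₀ hk2] at h
    simpa [sq, mul_assoc, mul_comm, mul_left_comm] using h
  obtain ⟨j, -, hj⟩ := exists_le_of_sum_le hne hsum
  obtain ⟨j', -, hj'⟩ := exists_le_of_sum_le hne hj
  exact ⟨j, j', hj'⟩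

/-- if `(b¹_1,…,b¹_k)` and `(b²_1,…,b²_k)` are `(k,1/3)`-sketches of the XOS
valuations `v1` and `v2`, then the average of `SW*(b¹_j, b²_{j'})` over all pairs is at
least `(23/32 − 1/k) · SW*(v1, v2)`; in particular some pair of reported sketch clauses
achieves welfare at least `(23/32 − 1/k) · SW*(v1, v2)`. -/
theorem stmt9 {m t1 t2 k : ℕ} (hk : 0 < k)
    (C1 : Fin (t1 + 1) → Fin m → ℝ) (C2 : Fin (t2 + 1) → Fin m → ℝ)
    (hC1 : ∀ j i, 0 ≤ C1 j i) (hC2 : ∀ j i, 0 ≤ C2 j i)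
    (σ1 : Fin k → Fin (t1 + 1)) (σ2 : Fin k → Fin (t2 + 1))
    (hσ1 : IsSketchR (1 / 3 : ℝ) C1 σ1) (hσ2 : IsSketchR (1 / 3 : ℝ) C2 σ2) :
    (1 / (k : ℝ) ^ 2) * ∑ j, ∑ j', swR (aval (C1 (σ1 j))) (aval (C2 (σ2 j')))
        ≥ (23 / 32 - 1 / k : ℝ) * swR (xosVal C1) (xosVal C2)
    ∧ ∃ j j', swR (aval (C1 (σ1 j))) (aval (C2 (σ2 j')))
        ≥ (23 / 32 - 1 / k : ℝ) * swR (xosVal C1) (xosVal C2) := by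
  set SW := swR (xosVal C1) (xosVal C2)
  obtain ⟨j₁, j₂, hSW⟩ := exists_swR_xosVal_le C1 C2
  have hwelfare := welfare_le_avg_add_swapGain hk (fun j => C1 (σ1 j)) (fun j => C2 (σ2 j))
    (fun j i => hC1 (σ1 j) i) (C1 j₁) (C2 j₂)
  have herr₁ := sum_setIntegral_swapErr_le hk (fun j => C1 (σ1 j)) (C1 j₁) (fun j i => hC1 (σ1 j) i)
    (hC1 j₁) (fun j => aval_univ_le_swR_left C1 C2 (σ1 j)) (aval_univ_le_swR_left C1 C2 j₁)
  have herr₂ := sum_setIntegral_swapErr_le hk (fun j => C2 (σ2 j)) (C2 j₂) (fun j i => hC2 (σ2 j) i)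
    (hC2 j₂) (fun j => aval_univ_le_swR_right C1 C2 (σ2 j)) (aval_univ_le_swR_right C1 C2 j₂)
  have hgain₁ := (hσ1.sum_swapGain_le hk j₁).trans
    (mul_le_mul_of_nonneg_left herr₁ (by positivity))
  have hgain₂ := (hσ2.sum_swapGain_le hk j₂).trans
    (mul_le_mul_of_nonneg_left herr₂ (by positivity))
  have havg : 1 / (k : ℝ) ^ 2 * ∑ j, ∑ j', swR (aval (C1 (σ1 j))) (aval (C2 (σ2 j')))
      ≥ (23 / 32 - 1 / k : ℝ) * SW := by
    linear_combination hwelfare + 23 / 32 * hSW + 3 / 4 * hgain₁ + 3 / 4 * hgain₂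
  exact ⟨havg, exists_le_of_le_avg hk havg⟩
end

section
/- Let m be a positive integer divisible by 6, and let S, T ⊆ [m] with |S| = |T| = m/2 and |S ∩ T| = m/3. Let A be drawn uniformly at random from all sets X ⊆ [m] with |X ∩ S| = m/3 and |X ∩ ([m] ∖ S)| = m/6, and independently let B be drawn uniformly at random from all sets X ⊆ [m] with |X ∩ T| = m/3 and |X ∩ ([m] ∖ T)| = m/6. Then for every ε > 0, Pr[|A ∪ B| ≥ (20/27 + ε)·m] ≤ exp(−2ε²m). -/
/-!
A uniform `k`-subset `X` of `U` satisfies `P(J ⊆ X) ≤ (k/|U|)^|J|` for every `J`. Such upper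
bounds on joint inclusion probabilities by products of marginals survive disjoint unions and
unions of independent random sets (with `p + q - pq` as the new marginal), so `A ∪ B` has them
with marginals `w i ∈ {8/9, 7/9, 5/9}` summing to `20m/27`. They are all that Chernoff's
argument needs: expanding `exp (t |X|) = ∏ i, (1 + (eᵗ - 1) 1[i ∈ X])` as a sum over `J`
gives `E exp (t |X|) ≤ ∏ i, (1 + (eᵗ - 1) w i)`, which Hoeffding's lemma bounds by
`exp (t Σ w i + t² m / 8)`; Markov's inequality with `t = 4ε` finishes.
-/

open Finset

/-- The family of "random clauses" correlated with a hidden set `S`: all sets `X ⊆ [m]`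
with `|X ∩ S| = m/3` and `|X ∩ ([m] ∖ S)| = m/6`. -/
def clauseFamily {m : ℕ} (S : Finset (Fin m)) : Finset (Finset (Fin m)) :=
  Finset.univ.filter fun X => (X ∩ S).card = m / 3 ∧ (X ∩ Sᶜ).card = m / 6

open Real ProbabilityTheory MeasureTheory

theorem one_add_mul_exp_sub_one_le_exp {p : ℝ} (hp0 : 0 ≤ p) (hp1 : p ≤ 1) (t : ℝ) :
    1 + p * (exp t - 1) ≤ exp (t * p + t ^ 2 / 8) := by
  let X : Bool → ℝ := fun b => if b then 1 else 0
  have hoeffding : p * exp (t * (1 - p)) + (1 - p) * exp (-(t * p)) ≤ exp (t ^ 2 / 8) := by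
    have h := (hasSubgaussianMGF_of_mem_Icc (X := X)
      (μ := bernoulliMeasure true false ⟨p, hp0, hp1⟩) (a := 0) (b := 1)
      (measurable_of_countable X).aemeasurable
      (ae_of_all _ fun b => by cases b <;> simp [X])).mgf_le t
    norm_num [X, mgf, integral_bernoulliMeasure] at h
    exact h.trans_eq (by ring_nf)
  have h1 : exp (t * p) * exp (t * (1 - p)) = exp t := by rw [← exp_add]; ring_nf
  have h0 : exp (t * p) * exp (-(t * p)) = 1 := by rw [← exp_add]; simp
  calc 1 + p * (exp t - 1)
      = exp (t * p) * (p * exp (t * (1 - p)) + (1 - p) * exp (-(t * p))) := by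
        linear_combination (-p) * h1 - (1 - p) * h0
    _ ≤ exp (t * p) * exp (t ^ 2 / 8) := mul_le_mul_of_nonneg_left hoeffding (exp_pos _).le
    _ = exp (t * p + t ^ 2 / 8) := (exp_add _ _).symm

theorem Nat.descFactorial_mul_pow_le {k n : ℕ} (hkn : k ≤ n) (j : ℕ) :
    k.descFactorial j * n ^ j ≤ n.descFactorial j * k ^ j := by
  induction j with
  | zero => simp
  | succ j ih =>
    have hstep : (k - j) * n ≤ (n - j) * k := by
      rw [Nat.sub_mul, Nat.sub_mul, mul_comm n k]
      exact Nat.sub_le_sub_left (Nat.mul_le_mul_left j hkn) _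
    calc k.descFactorial (j + 1) * n ^ (j + 1)
        = ((k - j) * n) * (k.descFactorial j * n ^ j) := by
          rw [Nat.descFactorial_succ, pow_succ]; ring
      _ ≤ ((n - j) * k) * (n.descFactorial j * k ^ j) := Nat.mul_le_mul hstep ih
      _ = n.descFactorial (j + 1) * k ^ (j + 1) := by
          rw [Nat.descFactorial_succ, pow_succ]; ring

theorem Nat.choose_mul_pow_le {k n : ℕ} (hkn : k ≤ n) (j : ℕ) :
    k.choose j * n ^ j ≤ n.choose j * k ^ j := by
  have h := Nat.descFactorial_mul_pow_le hkn j
  rw [Nat.descFactorial_eq_factorial_mul_choose, Nat.descFactorial_eq_factorial_mul_choose,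
    mul_assoc, mul_assoc] at h
  exact Nat.le_of_mul_le_mul_left h (Nat.factorial_pos j)

theorem Nat.choose_sub_mul_pow_le {n k j : ℕ} (hjk : j ≤ k) (hkn : k ≤ n) :
    (n - j).choose (k - j) * n ^ j ≤ k ^ j * n.choose k := by
  refine Nat.le_of_mul_le_mul_left ?_ (Nat.choose_pos (hjk.trans hkn))
  calc n.choose j * ((n - j).choose (k - j) * n ^ j)
      = n.choose k * (k.choose j * n ^ j) := by
        rw [← mul_assoc _ (k.choose j), Nat.choose_mul hjk]; ring
    _ ≤ n.choose k * (n.choose j * k ^ j) := Nat.mul_le_mul_left _ (Nat.choose_mul_pow_le hkn j)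
    _ = n.choose j * (k ^ j * n.choose k) := by ring

theorem card_filter_mul_exp_le_sum_exp {Ω : Type*} (s : Finset Ω) (f : Ω → ℝ) {a t : ℝ}
    (ht : 0 ≤ t) : #{ω ∈ s | a ≤ f ω} * exp (t * a) ≤ ∑ ω ∈ s, exp (t * f ω) :=
  calc #{ω ∈ s | a ≤ f ω} * exp (t * a) = ∑ ω ∈ s with a ≤ f ω, exp (t * a) := by
        rw [sum_const, nsmul_eq_mul]
    _ ≤ ∑ ω ∈ s with a ≤ f ω, exp (t * f ω) :=
        sum_le_sum fun ω hω => exp_le_exp.2 (mul_le_mul_of_nonneg_left (mem_filter.1 hω).2 ht)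
    _ ≤ ∑ ω ∈ s, exp (t * f ω) :=
        sum_le_sum_of_subset_of_nonneg (filter_subset _ _) fun _ _ _ => (exp_pos _).le

variable {Ω Ω' γ : Type*} [DecidableEq γ]

theorem card_filter_powersetCard_superset_le {J U : Finset γ} (hJU : J ⊆ U) (k : ℕ) :
    (#{X ∈ U.powersetCard k | J ⊆ X} : ℝ) ≤ ((k : ℝ) / #U) ^ #J * #(U.powersetCard k) := by
  rcases lt_or_ge k #J with hkJ | hJk
  · rw [filter_false_of_mem fun X hX hJX => ?_]
    · simp only [card_empty, Nat.cast_zero]; positivity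
    · have := card_le_card hJX
      rw [(mem_powersetCard.1 hX).2] at this
      omega
  rcases lt_or_ge #U k with hUk | hkU
  · simp [powersetCard_eq_empty.2 hUk]
  have hU : (0 : ℝ) < #U ^ #J := by
    rcases (#J).eq_zero_or_pos with h | h
    · simp [h]
    · exact pow_pos (by exact_mod_cast h.trans_le (card_le_card hJU)) _
  rw [card_filter_powersetCard_subset J U k hJU hJk, card_powersetCard, div_pow,
    div_mul_eq_mul_div, le_div_iff₀ hU]
  exact_mod_cast Nat.choose_sub_mul_pow_le hJk hkU

/-- For `ω` uniform in `s`, the random set `U ω` satisfies `P(J ⊆ U ω) ≤ ∏ i ∈ J, q i` for every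
`J`: the negative-correlation hypothesis of the generalized Chernoff bound. -/
def InclusionBounded (s : Finset Ω) (U : Ω → Finset γ) (q : γ → ℝ) : Prop :=
  ∀ J : Finset γ, (#{ω ∈ s | J ⊆ U ω} : ℝ) ≤ (∏ i ∈ J, q i) * #s

namespace InclusionBounded

variable {s : Finset Ω} {U : Ω → Finset γ} {p q : γ → ℝ}

theorem sum_prod_ite_le (h : InclusionBounded s U q) (I : Finset γ) {x y : γ → ℝ}
    (hy : ∀ i ∈ I, 0 ≤ y i) (hyx : ∀ i ∈ I, y i ≤ x i) :
    ∑ ω ∈ s, ∏ i ∈ I, (if i ∈ U ω then x i else y i)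
      ≤ (∏ i ∈ I, ((x i - y i) * q i + y i)) * #s := by
  have expand : ∀ ω, ∏ i ∈ I, (if i ∈ U ω then x i else y i)
      = ∑ J ∈ I.powerset, (∏ i ∈ J, (x i - y i)) * (∏ i ∈ I \ J, y i)
          * (if J ⊆ U ω then 1 else 0) := by
    intro ω
    rw [← prod_congr rfl fun i _ => (show (x i - y i) * (if i ∈ U ω then 1 else 0) + y i
      = if i ∈ U ω then x i else y i by split_ifs <;> ring), prod_add]
    refine sum_congr rfl fun J _ => ?_
    rw [prod_mul_distrib, prod_boole]
    simp only [mul_right_comm _ (ite _ _ _)]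
    rfl
  have hcoeff : ∀ J ∈ I.powerset, 0 ≤ (∏ i ∈ J, (x i - y i)) * (∏ i ∈ I \ J, y i) := by
    intro J hJ
    exact mul_nonneg (prod_nonneg fun i hi => sub_nonneg.2 (hyx i (mem_powerset.1 hJ hi)))
      (prod_nonneg fun i hi => hy i (mem_sdiff.1 hi).1)
  calc ∑ ω ∈ s, ∏ i ∈ I, (if i ∈ U ω then x i else y i)
      = ∑ J ∈ I.powerset, (∏ i ∈ J, (x i - y i)) * (∏ i ∈ I \ J, y i)
          * #{ω ∈ s | J ⊆ U ω} := by
        simp only [expand, card_filter, Nat.cast_sum, Nat.cast_ite, Nat.cast_one, Nat.cast_zero,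
          mul_sum]
        exact sum_comm
    _ ≤ ∑ J ∈ I.powerset, (∏ i ∈ J, (x i - y i)) * (∏ i ∈ I \ J, y i)
          * ((∏ i ∈ J, q i) * #s) :=
        sum_le_sum fun J hJ => mul_le_mul_of_nonneg_left (h J) (hcoeff J hJ)
    _ = (∏ i ∈ I, ((x i - y i) * q i + y i)) * #s := by
        rw [prod_add, sum_mul]
        refine sum_congr rfl fun J _ => ?_
        rw [prod_mul_distrib]
        ring

theorem union {t : Finset Ω'} {V : Ω' → Finset γ} (hs : InclusionBounded s U p)
    (ht : InclusionBounded t V q) (hq0 : ∀ i, 0 ≤ q i) (hq1 : ∀ i, q i ≤ 1) :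
    InclusionBounded (s ×ˢ t) (fun x => U x.1 ∪ V x.2) (fun i => p i + q i - p i * q i) := by
  intro J
  calc (#{x ∈ s ×ˢ t | J ⊆ U x.1 ∪ V x.2} : ℝ)
      = ∑ ω ∈ s, (#{ν ∈ t | J \ U ω ⊆ V ν} : ℝ) := by
        simp only [card_filter, sum_product, sdiff_le_iff, Nat.cast_sum]
        rfl
    _ ≤ ∑ ω ∈ s, (∏ i ∈ J, (if i ∈ U ω then 1 else q i)) * #t := by
        refine sum_le_sum fun ω _ => (ht _).trans_eq ?_
        rw [prod_ite, prod_const_one, one_mul]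
        congr 2
        ext i
        simp
    _ ≤ (∏ i ∈ J, ((1 - q i) * p i + q i)) * #s * #t := by
        rw [← sum_mul]
        gcongr
        exact hs.sum_prod_ite_le J (fun i _ => hq0 i) (fun i _ => hq1 i)
    _ = (∏ i ∈ J, (p i + q i - p i * q i)) * #(s ×ˢ t) := by
        rw [card_product, Nat.cast_mul, mul_assoc]
        congr 1
        exact prod_congr rfl fun i _ => by ring

theorem image (hU : Set.InjOn U s) (h : InclusionBounded s U q) :
    InclusionBounded (s.image U) (fun X => X) q := by
  intro J
  rw [filter_image, card_image_of_injOn (hU.mono (coe_subset.2 (filter_subset _ _))),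
    card_image_of_injOn hU]
  exact h J

theorem sum_exp_mul_card_le [Fintype γ] (h : InclusionBounded s U q) (hq0 : ∀ i, 0 ≤ q i)
    (hq1 : ∀ i, q i ≤ 1) {t : ℝ} (ht : 0 ≤ t) :
    ∑ ω ∈ s, exp (t * #(U ω)) ≤ exp (t * ∑ i, q i + t ^ 2 * Fintype.card γ / 8) * #s :=
  calc ∑ ω ∈ s, exp (t * #(U ω))
      = ∑ ω ∈ s, ∏ i, (if i ∈ U ω then exp t else 1) := by
        refine sum_congr rfl fun ω _ => ?_
        rw [prod_ite_mem, univ_inter, prod_const, ← exp_nat_mul, mul_comm]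
    _ ≤ (∏ i, ((exp t - 1) * q i + 1)) * #s :=
        h.sum_prod_ite_le univ (fun _ _ => zero_le_one) fun _ _ => one_le_exp ht
    _ ≤ (∏ i, exp (t * q i + t ^ 2 / 8)) * #s := by
        refine mul_le_mul_of_nonneg_right (prod_le_prod (fun i _ => ?_) fun i _ => ?_)
          (by positivity)
        · nlinarith [one_le_exp ht, hq0 i]
        · linarith [one_add_mul_exp_sub_one_le_exp (hq0 i) (hq1 i) t]
    _ = exp (t * ∑ i, q i + t ^ 2 * Fintype.card γ / 8) * #s := by
        rw [← exp_sum, sum_add_distrib, mul_sum, sum_const, card_univ, nsmul_eq_mul]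
        ring_nf

theorem card_filter_le_exp [Fintype γ] (h : InclusionBounded s U q) (hq0 : ∀ i, 0 ≤ q i)
    (hq1 : ∀ i, q i ≤ 1) {μ ε : ℝ} (hμ : ∑ i, q i ≤ μ * Fintype.card γ) (hε : 0 ≤ ε) :
    (#{ω ∈ s | (μ + ε) * Fintype.card γ ≤ #(U ω)} : ℝ)
      ≤ exp (-2 * ε ^ 2 * Fintype.card γ) * #s := by
  set n : ℝ := (Fintype.card γ : ℝ)
  have ht : 0 ≤ 4 * ε := by positivity
  have hmarkov := card_filter_mul_exp_le_sum_exp s (fun ω => (#(U ω) : ℝ)) (a := (μ + ε) * n) ht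
  have hmgf := h.sum_exp_mul_card_le hq0 hq1 ht
  have hexp : exp (4 * ε * (μ * n) + (4 * ε) ^ 2 * n / 8)
      = exp (-2 * ε ^ 2 * n) * exp (4 * ε * ((μ + ε) * n)) := by
    rw [← exp_add]; ring_nf
  refine le_of_mul_le_mul_right ?_ (exp_pos (4 * ε * ((μ + ε) * n)))
  calc _ ≤ exp (4 * ε * ∑ i, q i + (4 * ε) ^ 2 * n / 8) * #s := hmarkov.trans hmgf
    _ ≤ exp (4 * ε * (μ * n) + (4 * ε) ^ 2 * n / 8) * #s := by gcongr
    _ = _ := by rw [hexp]; ring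

end InclusionBounded

theorem inclusionBounded_powersetCard (U : Finset γ) (k : ℕ) :
    InclusionBounded (U.powersetCard k) (fun X => X)
      (fun i => if i ∈ U then (k : ℝ) / #U else 0) := by
  intro J
  by_cases hJU : J ⊆ U
  · rw [prod_congr rfl fun i hi => if_pos (hJU hi), prod_const]
    exact card_filter_powersetCard_superset_le hJU k
  · rw [filter_false_of_mem fun X hX hJX => hJU (hJX.trans (mem_powersetCard.1 hX).1)]
    simp only [card_empty, Nat.cast_zero]
    positivity

section Compl

variable {α : Type*} [Fintype α] [DecidableEq α]

theorem union_inter_eq_of_subset_compl {S Y Z : Finset α} (hY : Y ⊆ S) (hZ : Z ⊆ Sᶜ) :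
    (Y ∪ Z) ∩ S = Y ∧ (Y ∪ Z) ∩ Sᶜ = Z := by
  constructor <;> ext x <;> have := @hY x <;> have := @hZ x <;> simp at * <;> tauto

theorem injOn_union_powersetCard (S : Finset α) (a b : ℕ) :
    Set.InjOn (fun x : Finset α × Finset α => x.1 ∪ x.2)
      (S.powersetCard a ×ˢ Sᶜ.powersetCard b : Finset _) := by
  rintro ⟨Y, Z⟩ hYZ ⟨Y', Z'⟩ hYZ' h
  simp only [coe_product, Set.mem_prod, mem_coe, mem_powersetCard] at hYZ hYZ'
  obtain ⟨hYS, hZS⟩ := union_inter_eq_of_subset_compl hYZ.1.1 hYZ.2.1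
  obtain ⟨hYS', hZS'⟩ := union_inter_eq_of_subset_compl hYZ'.1.1 hYZ'.2.1
  simp only at h
  exact Prod.ext (hYS.symm.trans (by rw [h, hYS'])) (hZS.symm.trans (by rw [h, hZS']))

end Compl

section Clause

variable {m : ℕ}

theorem clauseFamily_eq_image (S : Finset (Fin m)) :
    clauseFamily S = (S.powersetCard (m / 3) ×ˢ Sᶜ.powersetCard (m / 6)).image
      (fun x => x.1 ∪ x.2) := by
  ext X
  simp only [clauseFamily, mem_filter, mem_univ, true_and, mem_image, mem_product,
    mem_powersetCard, Prod.exists]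
  constructor
  · rintro ⟨h3, h6⟩
    exact ⟨X ∩ S, X ∩ Sᶜ, ⟨⟨inter_subset_right, h3⟩, ⟨inter_subset_right, h6⟩⟩, by
      ext x; by_cases x ∈ S <;> simp [*]⟩
  · rintro ⟨Y, Z, ⟨⟨hY, h3⟩, ⟨hZ, h6⟩⟩, rfl⟩
    obtain ⟨hYS, hZS⟩ := union_inter_eq_of_subset_compl hY hZ
    rw [hYS, hZS]
    exact ⟨h3, h6⟩

noncomputable def clauseProb (S : Finset (Fin m)) (i : Fin m) : ℝ :=
  if i ∈ S then 2 / 3 else 1 / 3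

theorem clauseProb_nonneg (S : Finset (Fin m)) (i : Fin m) : 0 ≤ clauseProb S i := by
  unfold clauseProb; split_ifs <;> norm_num

theorem clauseProb_le_one (S : Finset (Fin m)) (i : Fin m) : clauseProb S i ≤ 1 := by
  unfold clauseProb; split_ifs <;> norm_num

theorem inclusionBounded_clauseFamily (hm : 0 < m) (h6 : 6 ∣ m) {S : Finset (Fin m)}
    (hS : #S = m / 2) : InclusionBounded (clauseFamily S) (fun X => X) (clauseProb S) := by
  obtain ⟨r, rfl⟩ := h6
  have hr : (r : ℝ) ≠ 0 := by norm_cast; omega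
  have hSc : #Sᶜ = 6 * r / 2 := by rw [card_compl, Fintype.card_fin]; omega
  have hin : ((6 * r / 3 : ℕ) : ℝ) / #S = 2 / 3 := by
    rw [hS, show 6 * r / 3 = 2 * r by omega, show 6 * r / 2 = 3 * r by omega]
    push_cast; field_simp
  have hout : ((6 * r / 6 : ℕ) : ℝ) / #Sᶜ = 1 / 3 := by
    rw [hSc, show 6 * r / 6 = r by omega, show 6 * r / 2 = 3 * r by omega]
    push_cast; field_simp
  have h := ((inclusionBounded_powersetCard S (6 * r / 3)).union
    (inclusionBounded_powersetCard Sᶜ (6 * r / 6))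
    (fun i => by by_cases hi : i ∈ Sᶜ <;> simp only [hi, ↓reduceIte, hout] <;> norm_num)
    (fun i => by by_cases hi : i ∈ Sᶜ <;> simp only [hi, ↓reduceIte, hout] <;> norm_num)).image
    (injOn_union_powersetCard S _ _)
  rw [← clauseFamily_eq_image] at h
  convert h using 1
  funext i
  by_cases hi : i ∈ S <;>
    simp only [clauseProb, hi, mem_compl, not_true_eq_false, not_false_eq_true, ↓reduceIte, hin,
      hout] <;> norm_num

theorem sum_clauseProb_union (h6 : 6 ∣ m) {S T : Finset (Fin m)} (hS : #S = m / 2)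
    (hT : #T = m / 2) (hST : #(S ∩ T) = m / 3) :
    ∑ i, (clauseProb S i + clauseProb T i - clauseProb S i * clauseProb T i) = 20 / 27 * m := by
  have hpoint : ∀ i, clauseProb S i + clauseProb T i - clauseProb S i * clauseProb T i
      = 5 / 9 + 2 / 9 * (if i ∈ S then 1 else 0) + 2 / 9 * (if i ∈ T then 1 else 0)
        - 1 / 9 * (if i ∈ S ∩ T then 1 else 0) := by
    intro i
    by_cases hiS : i ∈ S <;> by_cases hiT : i ∈ T <;> simp [clauseProb, hiS, hiT] <;> norm_num
  obtain ⟨r, rfl⟩ := h6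
  simp only [hpoint, sum_add_distrib, sum_sub_distrib, ← mul_sum, sum_boole, filter_mem_eq_inter,
    univ_inter, sum_const, card_univ, Fintype.card_fin, nsmul_eq_mul, hS, hT, hST]
  rw [show 6 * r / 2 = 3 * r by omega, show 6 * r / 3 = 2 * r by omega]
  push_cast
  ring

end Clause

/-- if `A` and `B` are drawn independently and uniformly from the clause
families of `S` and `T` respectively, where `|S| = |T| = m/2` and `|S ∩ T| = m/3`, then
for every `ε > 0`, `Pr[|A ∪ B| ≥ (20/27 + ε) m] ≤ exp(−2ε²m)`. -/
theorem stmt17 {m : ℕ} (hm : 0 < m) (h6 : 6 ∣ m)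
    (S T : Finset (Fin m)) (hS : S.card = m / 2) (hT : T.card = m / 2)
    (hST : (S ∩ T).card = m / 3) (ε : ℝ) (hε : 0 < ε) :
    ((((clauseFamily S ×ˢ clauseFamily T).filter
          fun p => (20 / 27 + ε) * m ≤ (((p.1 ∪ p.2).card : ℝ))).card : ℝ)
        / (((clauseFamily S).card : ℝ) * ((clauseFamily T).card : ℝ)))
      ≤ Real.exp (-2 * ε ^ 2 * m) := by
  have hAB := (inclusionBounded_clauseFamily hm h6 hS).union
    (inclusionBounded_clauseFamily hm h6 hT) (clauseProb_nonneg T) (clauseProb_le_one T)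
  have hAB0 : ∀ i, 0 ≤ clauseProb S i + clauseProb T i - clauseProb S i * clauseProb T i :=
    fun i => by
      nlinarith [mul_nonneg (clauseProb_nonneg S i) (sub_nonneg.2 (clauseProb_le_one T i)),
        clauseProb_nonneg T i]
  have hAB1 : ∀ i, clauseProb S i + clauseProb T i - clauseProb S i * clauseProb T i ≤ 1 :=
    fun i => by
      nlinarith [mul_nonneg (sub_nonneg.2 (clauseProb_le_one S i))
        (sub_nonneg.2 (clauseProb_le_one T i))]
  have h := hAB.card_filter_le_exp hAB0 hAB1 (μ := 20 / 27)
    (by rw [sum_clauseProb_union h6 hS hT hST, Fintype.card_fin]) hε.le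
  rw [card_product, Nat.cast_mul, Fintype.card_fin] at h
  exact div_le_of_le_mul₀ (by positivity) (by positivity) h
end
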